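/- arXiv:1711.03013 — 4 statements merged into one kernel-verified Lean document; each statement's English description precedes it below -/
import Mathlib

section
/- Let (B_t)_{t∈G} be a concrete Fell bundle over a group G in a C*-algebra L and let (X_t)_{t∈G} be a concrete right Hilbert (B_t)-bundle. If (X_t) is full, then for every r ∈ G the fiber B_r equals the closed linear span of {x*·y : x ∈ X_s, y ∈ X_{sr}, s ∈ G}. -/
/-!
If `b ∈ B r`, then `b b* ∈ B e`, and functional calculus applied to `b b*` produces elements
`c = f(b b*)` of `B e` with `c b → b`: for `f(x) = x² / (x² + δ²)` one gets
`‖b - c b‖² ≤ 2 ‖b b* - c b b*‖ ≤ δ`. By fullness `c` is a limit of sums of `x* y` with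
`x, y ∈ X s`, so `c b` is a limit of sums of `x* (y b)` with `y b ∈ X (s r)`.
-/

/-- The closed linear span (over `ℂ`) of a set in a normed `ℂ`-algebra. -/
noncomputable def closedSpan {L : Type*} [NormedRing L] [NormedAlgebra ℂ L]
    (S : Set L) : Submodule ℂ L :=
  (Submodule.span ℂ S).topologicalClosure

lemma abs_sub_sq_div_mul_le (x : ℝ) {δ : ℝ} (hδ : 0 < δ) :
    |x - x ^ 2 / (x ^ 2 + δ ^ 2) * x| ≤ δ / 2 := by
  have hden : 0 < x ^ 2 + δ ^ 2 := by positivity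
  have hx : x - x ^ 2 / (x ^ 2 + δ ^ 2) * x = x * δ ^ 2 / (x ^ 2 + δ ^ 2) := by
    field_simp; ring
  -- AM-GM: `2 |x| δ ≤ x² + δ²`
  rw [hx, abs_div, abs_mul, abs_of_pos hden, abs_of_nonneg (sq_nonneg δ), div_le_iff₀ hden]
  nlinarith [sq_nonneg (|x| - δ), sq_abs x]

lemma abs_sq_div_sq_add_sq_le_one (x δ : ℝ) : |x ^ 2 / (x ^ 2 + δ ^ 2)| ≤ 1 := by
  rw [abs_of_nonneg (by positivity)]
  exact div_le_one_of_le₀ (le_add_of_nonneg_right (sq_nonneg δ)) (by positivity)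

section CStarAlgebra

variable {L : Type*} [NonUnitalCStarAlgebra L]

lemma norm_sub_mul_sq_le_of_isSelfAdjoint (b : L) {c : L} (hc : IsSelfAdjoint c)
    (hc₁ : ‖c‖ ≤ 1) : ‖b - c * b‖ ^ 2 ≤ 2 * ‖b * star b - c * (b * star b)‖ := by
  set e := b * star b - c * (b * star b)
  have hd : (b - c * b) * star (b - c * b) = e - e * c := by
    simp only [e, star_sub, star_mul, hc.star_eq]
    noncomm_ring
  calc ‖b - c * b‖ ^ 2 = ‖e - e * c‖ := by rw [sq, ← CStarRing.norm_self_mul_star, hd]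
    _ ≤ ‖e‖ + ‖e‖ * ‖c‖ := (norm_sub_le _ _).trans (add_le_add_right (norm_mul_le _ _) _)
    _ ≤ 2 * ‖e‖ := by nlinarith [norm_nonneg e]

lemma norm_cfcₙ_sq_div_sq_add_sq_le_one (a : L) (δ : ℝ) :
    ‖cfcₙ (fun x : ℝ ↦ x ^ 2 / (x ^ 2 + δ ^ 2)) a‖ ≤ 1 :=
  norm_cfcₙ_le fun x _ ↦ abs_sq_div_sq_add_sq_le_one x δ

lemma norm_sub_cfcₙ_sq_div_sq_add_sq_mul_le {a : L} (ha : IsSelfAdjoint a) {δ : ℝ}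
    (hδ : 0 < δ) : ‖a - cfcₙ (fun x : ℝ ↦ x ^ 2 / (x ^ 2 + δ ^ 2)) a * a‖ ≤ δ / 2 := by
  have hcont : Continuous fun x : ℝ ↦ x ^ 2 / (x ^ 2 + δ ^ 2) :=
    by fun_prop (disch := intro x; positivity)
  have hsub : a - cfcₙ (fun x : ℝ ↦ x ^ 2 / (x ^ 2 + δ ^ 2)) a * a
      = cfcₙ (fun x : ℝ ↦ x - x ^ 2 / (x ^ 2 + δ ^ 2) * x) a := by
    rw [cfcₙ_sub _ _ a, cfcₙ_mul _ _ a hcont.continuousOn, cfcₙ_id' ℝ a]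
  rw [hsub]
  exact norm_cfcₙ_le fun x _ ↦ abs_sub_sq_div_mul_le x hδ

lemma mem_closure_cfcₙ_mul_self_mul_star (b : L) :
    b ∈ closure (Set.range fun f : ℝ → ℝ ↦ cfcₙ f (b * star b) * b) := by
  refine Metric.mem_closure_iff.2 fun ε hε ↦ ?_
  set f : ℝ → ℝ := fun x ↦ x ^ 2 / (x ^ 2 + (ε ^ 2 / 2) ^ 2)
  refine ⟨cfcₙ f (b * star b) * b, ⟨f, rfl⟩, ?_⟩
  have h₁ := norm_sub_mul_sq_le_of_isSelfAdjoint b (cfcₙ_predicate f (b * star b))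
    (norm_cfcₙ_sq_div_sq_add_sq_le_one _ _)
  have h₂ : ‖b * star b - cfcₙ f (b * star b) * (b * star b)‖ ≤ ε ^ 2 / 2 / 2 :=
    norm_sub_cfcₙ_sq_div_sq_add_sq_mul_le (.mul_star_self b) (by positivity)
  rw [dist_eq_norm, ← abs_of_nonneg (norm_nonneg _), ← abs_of_pos hε]
  exact sq_lt_sq.1 (by linarith [pow_pos hε 2])

lemma Submodule.cfcₙ_mem {A : Submodule ℂ L} (hA : IsClosed (A : Set L))
    (hmul : ∀ x ∈ A, ∀ y ∈ A, x * y ∈ A) (hstar : ∀ x ∈ A, star x ∈ A)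
    (f : ℝ → ℝ) {a : L} (ha : a ∈ A) : cfcₙ f a ∈ A :=
  let S : NonUnitalStarSubalgebra ℂ L :=
    { A with
      mul_mem' := fun hx hy ↦ hmul _ hx _ hy
      star_mem' := fun hx ↦ hstar _ hx }
  have : IsClosed (S : Set L) := hA
  _root_.cfcₙ_mem (𝕜 := ℝ) (s := S) f (a := a) ha

lemma Submodule.mem_closure_image_mul_right {A : Submodule ℂ L} (hA : IsClosed (A : Set L))
    (hmul : ∀ x ∈ A, ∀ y ∈ A, x * y ∈ A) (hstar : ∀ x ∈ A, star x ∈ A)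
    {b : L} (hb : b * star b ∈ A) : b ∈ closure ((· * b) '' A) := by
  refine closure_mono ?_ (mem_closure_cfcₙ_mul_self_mul_star b)
  rintro _ ⟨f, rfl⟩
  exact ⟨_, A.cfcₙ_mem hA hmul hstar f hb, rfl⟩

end CStarAlgebra

section ClosedSpan

variable {L : Type*} [NormedRing L] [NormedAlgebra ℂ L]

lemma closedSpan_le {S : Set L} {M : Submodule ℂ L} (hM : IsClosed (M : Set L))
    (hS : S ⊆ M) : closedSpan S ≤ M :=
  Submodule.topologicalClosure_minimal _ (Submodule.span_le.2 hS) hM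

lemma mul_right_mem_closedSpan {S T : Set L} {b : L} (hTS : ∀ t ∈ T, t * b ∈ S) {c : L}
    (hc : c ∈ closedSpan T) : c * b ∈ closedSpan S := by
  have hclosed : IsClosed ((closedSpan S).comap (LinearMap.mulRight ℂ b) : Set L) :=
    (Submodule.isClosed_topologicalClosure _).preimage (continuous_mul_const b)
  exact closedSpan_le hclosed
    (fun t ht ↦ (Submodule.span ℂ S).le_topologicalClosure (Submodule.subset_span (hTS t ht))) hc

end ClosedSpan

theorem fiber_eq_closedSpan_of_full_general
    {G L : Type*} [Group G] [NormedRing L] [StarRing L] [CStarRing L]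
    [NormedAlgebra ℂ L] [StarModule ℂ L] [CompleteSpace L]
    (B : G → Submodule ℂ L)
    (hBclosed : ∀ t : G, IsClosed (B t : Set L))
    (hBmul : ∀ r s : G, ∀ b ∈ B r, ∀ c ∈ B s, b * c ∈ B (r * s))
    (hBstar : ∀ t : G, ∀ b ∈ B t, star b ∈ B t⁻¹)
    (X : G → Submodule ℂ L)
    (hXact : ∀ r s : G, ∀ x ∈ X r, ∀ b ∈ B s, x * b ∈ X (r * s))
    (hXinner : ∀ r s : G, ∀ x ∈ X r, ∀ y ∈ X s, star x * y ∈ B (r⁻¹ * s))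
    (hfull : closedSpan {z : L | ∃ t : G, ∃ x ∈ X t, ∃ y ∈ X t, z = star x * y} = B 1) :
    ∀ r : G,
      B r = closedSpan {z : L | ∃ s : G, ∃ x ∈ X s, ∃ y ∈ X (s * r), z = star x * y} := by
  let : CStarAlgebra L := {}
  intro r
  refine le_antisymm (fun b hb ↦ ?_) (closedSpan_le (hBclosed r) ?_)
  · have hunit : b ∈ closure ((· * b) '' (B 1 : Set L)) :=
      (B 1).mem_closure_image_mul_right (hBclosed 1) (by simpa using hBmul 1 1)
        (by simpa using hBstar 1) (by simpa using hBmul r r⁻¹ b hb _ (hBstar r b hb))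
    refine closure_minimal ?_ (Submodule.isClosed_topologicalClosure _) hunit
    rintro _ ⟨c, hc, rfl⟩
    refine mul_right_mem_closedSpan ?_ (hfull ▸ hc)
    rintro _ ⟨t, x, hx, y, hy, rfl⟩
    exact ⟨t, x, hx, y * b, hXact t r y hy b hb, mul_assoc _ _ _⟩
  · rintro _ ⟨s, x, hx, y, hy, rfl⟩
    simpa using hXinner s (s * r) x hx y hy

/-- If `(X t)` is a full concrete right Hilbert `(B t)`-bundle over a concrete Fell
bundle `(B t)`, then each fiber `B r` is the closed linear span of
`{x* ⬝ y : x ∈ X s, y ∈ X (s*r), s ∈ G}`. -/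
theorem fiber_eq_closedSpan_of_full
    {G L : Type*} [Group G] [NormedRing L] [StarRing L] [CStarRing L]
    [NormedAlgebra ℂ L] [StarModule ℂ L] [CompleteSpace L]
    (B : G → Submodule ℂ L)
    (hBclosed : ∀ t : G, IsClosed (B t : Set L))
    (hBmul : ∀ r s : G, ∀ b ∈ B r, ∀ c ∈ B s, b * c ∈ B (r * s))
    (hBstar : ∀ t : G, ∀ b ∈ B t, star b ∈ B t⁻¹)
    (X : G → Submodule ℂ L)
    (hXclosed : ∀ t : G, IsClosed (X t : Set L))
    (hXact : ∀ r s : G, ∀ x ∈ X r, ∀ b ∈ B s, x * b ∈ X (r * s))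
    (hXinner : ∀ r s : G, ∀ x ∈ X r, ∀ y ∈ X s, star x * y ∈ B (r⁻¹ * s))
    (hfull : closedSpan {z : L | ∃ t : G, ∃ x ∈ X t, ∃ y ∈ X t, z = star x * y} = B 1) :
    ∀ r : G,
      B r = closedSpan {z : L | ∃ s : G, ∃ x ∈ X s, ∃ y ∈ X (s * r), z = star x * y} :=
  fiber_eq_closedSpan_of_full_general B hBclosed hBmul hBstar X hXact hXinner hfull
end

section
/- Let (A_t)_{t∈G} and (B_t)_{t∈G} be concrete Fell bundles over a group G in a C*-algebra L, and let (X_t)_{t∈G} be a concrete strong (A_t)–(B_t) equivalence bundle. Then for all r, s ∈ G one has A_r⋅X_s = X_r⋅B_s, i.e. the closed linear span of {a·x : a ∈ A_r, x ∈ X_s} equals the closed linear span of {x·b : x ∈ X_r, b ∈ B_s}. -/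
/-- `S⋅T`: the closed linear span of all products `s * t` with `s ∈ S`, `t ∈ T`. -/
noncomputable def mulSpan {L : Type*} [NormedRing L] [NormedAlgebra ℂ L]
    (S T : Set L) : Submodule ℂ L :=
  closedSpan (Set.image2 (· * ·) S T)

/-!
For `a` in a C*-algebra put `c = a * star a` and `w = 1 - ‖c‖⁻¹ • c`. The C*-identity and the
continuous functional calculus give `‖wⁿ * a‖² = ‖wⁿ * c * wⁿ‖ ≤ ‖c‖ / (n + 1)`, while `1 - wⁿ`
is a polynomial in `c` without constant term. Hence `a` lies in every closed subspace containing
all `(a * star a) ^ (k + 1) * a`.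

For `a ∈ A r` and `x ∈ X s` these powers lie in `A r ⋅ (A r)* = X r ⋅ (X r)*`, and
`y * star z * (a * x) = y * (star z * (a * x))` with `star z * (a * x) ∈ B s` for `y, z ∈ X r`;
so `a * x ∈ X r ⋅ B s`. The reverse inclusion is the mirror image, approximating `b ∈ B s` by
`b * (1 - w'ⁿ)` with `w'` built from `star b * b`.
-/

open Polynomial Filter Topology

section Polynomial

variable {R A : Type*} [CommRing R] [Ring A] [Algebra R A]

lemma aeval_mem_span_pow_succ {p : R[X]} (hp : p.coeff 0 = 0) (c : A) :
    aeval c p ∈ Submodule.span R (Set.range fun k : ℕ => c ^ (k + 1)) := by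
  rw [aeval_eq_sum_range]
  refine Submodule.sum_mem _ fun i _ => ?_
  rcases i with _ | k
  · simp [hp]
  · exact Submodule.smul_mem _ _ (Submodule.subset_span ⟨k, rfl⟩)

lemma one_sub_pow_one_sub_smul_mem_span (r : R) (c : A) (n : ℕ) :
    1 - (1 - r • c) ^ n ∈ Submodule.span R (Set.range fun k : ℕ => c ^ (k + 1)) := by
  have := aeval_mem_span_pow_succ (p := 1 - (1 - C r * X) ^ n)
    (by simp [coeff_zero_eq_eval_zero]) c
  rwa [map_sub, map_pow, map_sub, map_one, map_mul, aeval_C, aeval_X, ← Algebra.smul_def] at this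

end Polynomial

lemma mul_one_sub_mul_pow_le_one {s : ℝ} (h0 : 0 ≤ s) (h1 : s ≤ 1) (n : ℕ) :
    (n + 1) * ((1 - s) * s ^ n) ≤ 1 := by
  have hsum : (n + 1) * s ^ n ≤ ∑ i ∈ Finset.range (n + 1), s ^ i := by
    simpa using Finset.card_nsmul_le_sum (Finset.range (n + 1)) (s ^ ·) (s ^ n)
      fun i hi => pow_le_pow_of_le_one h0 h1 (Finset.mem_range_succ_iff.mp hi)
  have hgeom : (1 - s) * ∑ i ∈ Finset.range (n + 1), s ^ i = 1 - s ^ (n + 1) := by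
    rw [mul_comm, geom_sum_mul_neg]
  nlinarith [pow_nonneg h0 (n + 1), mul_le_mul_of_nonneg_left hsum (sub_nonneg.mpr h1)]

lemma norm_pow_mul_mul_pow_le {R t : ℝ} (ht0 : 0 ≤ t) (htR : t ≤ R) (n : ℕ) :
    ‖(1 - R⁻¹ * t) ^ n * t * (1 - R⁻¹ * t) ^ n‖ ≤ R / (n + 1) := by
  rcases (ht0.trans htR).eq_or_lt with rfl | hR
  · simp [le_antisymm htR ht0]
  set s := 1 - R⁻¹ * t
  have hs0 : 0 ≤ s := by
    rw [sub_nonneg, inv_mul_le_iff₀ hR]; linarith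
  have hs1 : s ≤ 1 := by
    have := mul_nonneg (inv_nonneg.mpr hR.le) ht0; linarith
  have ht : t = R * (1 - s) := by rw [sub_sub_cancel, mul_inv_cancel_left₀ hR.ne']
  rw [Real.norm_of_nonneg (by positivity), le_div_iff₀ (by positivity)]
  calc s ^ n * t * s ^ n * (n + 1) = R * ((n + 1) * ((1 - s) * s ^ n)) * s ^ n := by
        rw [ht]; ring
    _ ≤ R * 1 * 1 := by
        gcongr
        · exact mul_one_sub_mul_pow_le_one hs0 hs1 n
        · exact pow_le_one₀ hs0 hs1
    _ = R := by ring

section CStarAlgebra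

variable {A : Type*} [CStarAlgebra A]

lemma norm_one_sub_smul_pow_mul_sq_le (a : A) (n : ℕ) :
    ‖(1 - ‖a * star a‖⁻¹ • (a * star a)) ^ n * a‖ ^ 2 ≤ ‖a * star a‖ / (n + 1) := by
  rcases subsingleton_or_nontrivial A with _ | _
  · simp [Subsingleton.elim a 0]
  set c := a * star a with hc
  set R := ‖c‖
  have hc_sa : IsSelfAdjoint c := .mul_star_self a
  set v := (1 - R⁻¹ • c) ^ n with hv
  have hv_sa : star v = v := by
    rw [hv, star_pow, star_sub, star_one, star_smul, hc_sa.star_eq, star_trivial]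
  have hv_cfc : cfc (fun t : ℝ => (1 - R⁻¹ * t) ^ n) c = v := by
    rw [cfc_pow _ _ c, cfc_sub _ _ c, cfc_const_mul _ _ c, cfc_id' ℝ c, cfc_const_one ℝ c]
  have hvcv :
      v * c * v = cfc (fun t : ℝ => (1 - R⁻¹ * t) ^ n * t * (1 - R⁻¹ * t) ^ n) c := by
    rw [cfc_mul _ _ c, cfc_mul _ _ c, cfc_id' ℝ c, hv_cfc]
  have hspec : ∀ t ∈ spectrum ℝ c, 0 ≤ t ∧ t ≤ R := fun t ht =>
    ⟨by simpa using spectrum_star_mul_self_nonneg (b := star a) t (by simpa using ht),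
      (Real.le_norm_self t).trans (spectrum.norm_le_norm_of_mem ht)⟩
  calc ‖v * a‖ ^ 2 = ‖v * c * v‖ := by
        rw [sq, ← CStarRing.norm_self_mul_star, star_mul, hv_sa, hc, mul_assoc, mul_assoc,
          mul_assoc]
    _ ≤ R / (n + 1) := by
        rw [hvcv]
        exact norm_cfc_le (by positivity) fun t ht =>
          norm_pow_mul_mul_pow_le (hspec t ht).1 (hspec t ht).2 n

lemma tendsto_one_sub_smul_pow_mul (a : A) :
    Tendsto (fun n : ℕ => (1 - ‖a * star a‖⁻¹ • (a * star a)) ^ n * a) atTop (𝓝 0) := by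
  have hlim :
      Tendsto (fun n : ℕ => √(‖a * star a‖ * (1 / ((n : ℝ) + 1)))) atTop (𝓝 0) := by
    simpa using
      ((tendsto_one_div_add_atTop_nhds_zero_nat (𝕜 := ℝ)).const_mul ‖a * star a‖).sqrt
  refine squeeze_zero_norm (fun n => ?_) hlim
  have h := Real.abs_le_sqrt (norm_one_sub_smul_pow_mul_sq_le a n)
  rwa [abs_norm, div_eq_mul_one_div] at h

lemma tendsto_mul_one_sub_smul_pow (a : A) :
    Tendsto (fun n : ℕ => a * (1 - ‖star a * a‖⁻¹ • (star a * a)) ^ n) atTop (𝓝 0) := by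
  have h := (tendsto_one_sub_smul_pow_mul (star a)).star
  rw [star_zero] at h
  refine h.congr fun n => ?_
  rw [star_mul, star_star, star_pow, star_sub, star_one, star_smul, star_trivial, star_mul,
    star_star]

theorem mem_of_forall_pow_mul_star_self_mul_mem {P : Submodule ℂ A}
    (hP : IsClosed (P : Set A)) {a : A} (h : ∀ k : ℕ, (a * star a) ^ (k + 1) * a ∈ P) : a ∈ P := by
  set w := 1 - ‖a * star a‖⁻¹ • (a * star a)
  have hspan : Submodule.span ℝ (Set.range fun k : ℕ => (a * star a) ^ (k + 1)) ≤
      (P.restrictScalars ℝ).comap (LinearMap.mulRight ℝ a) :=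
    Submodule.span_le.mpr <| Set.range_subset_iff.mpr h
  have hmem : ∀ n : ℕ, a - w ^ n * a ∈ P := fun n => by
    simpa [sub_mul] using hspan (one_sub_pow_one_sub_smul_mem_span _ _ n)
  have hlim : Tendsto (fun n : ℕ => a - w ^ n * a) atTop (𝓝 a) := by
    simpa using tendsto_const_nhds.sub (tendsto_one_sub_smul_pow_mul a)
  exact hP.mem_of_tendsto hlim (.of_forall hmem)

theorem mem_of_forall_mul_star_mul_self_pow_mem {P : Submodule ℂ A}
    (hP : IsClosed (P : Set A)) {a : A} (h : ∀ k : ℕ, a * (star a * a) ^ (k + 1) ∈ P) : a ∈ P := by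
  set w := 1 - ‖star a * a‖⁻¹ • (star a * a)
  have hspan : Submodule.span ℝ (Set.range fun k : ℕ => (star a * a) ^ (k + 1)) ≤
      (P.restrictScalars ℝ).comap (LinearMap.mulLeft ℝ a) :=
    Submodule.span_le.mpr <| Set.range_subset_iff.mpr h
  have hmem : ∀ n : ℕ, a - a * w ^ n ∈ P := fun n => by
    simpa [mul_sub] using hspan (one_sub_pow_one_sub_smul_mem_span _ _ n)
  have hlim : Tendsto (fun n : ℕ => a - a * w ^ n) atTop (𝓝 a) := by
    simpa using tendsto_const_nhds.sub (tendsto_mul_one_sub_smul_pow a)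
  exact hP.mem_of_tendsto hlim (.of_forall hmem)

end CStarAlgebra

section Monoid

variable {M : Type*} [Monoid M] [Star M] {S : Set M}

lemma mul_star_mul_self_pow_mem (hS : ∀ x ∈ S, ∀ y ∈ S, ∀ z ∈ S, x * star y * z ∈ S)
    {a : M} (ha : a ∈ S) (k : ℕ) : a * (star a * a) ^ k ∈ S := by
  induction k with
  | zero => simpa using ha
  | succ k ih => simpa [pow_succ, ← mul_assoc] using hS _ ih _ ha _ ha

end Monoid

section MulSpan

variable {L : Type*} [NormedRing L] [NormedAlgebra ℂ L] {S T : Set L} {P : Submodule ℂ L}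

lemma mul_mem_mulSpan {s t : L} (hs : s ∈ S) (ht : t ∈ T) : s * t ∈ mulSpan S T :=
  Submodule.le_topologicalClosure _ (Submodule.subset_span (Set.mem_image2_of_mem hs ht))

lemma mulSpan_le (hP : IsClosed (P : Set L)) (h : ∀ s ∈ S, ∀ t ∈ T, s * t ∈ P) :
    mulSpan S T ≤ P :=
  Submodule.topologicalClosure_minimal _
    (Submodule.span_le.mpr (Set.image2_subset_iff.mpr h)) hP

lemma isClosed_mulSpan (S T : Set L) : IsClosed (mulSpan S T : Set L) :=
  Submodule.isClosed_topologicalClosure _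

lemma mul_mem_of_mem_mulSpan_right (hP : IsClosed (P : Set L)) {z e : L}
    (h : ∀ s ∈ S, ∀ t ∈ T, s * t * z ∈ P) (he : e ∈ mulSpan S T) : e * z ∈ P :=
  mulSpan_le (P := P.comap (LinearMap.mulRight ℂ z))
    (hP.preimage (continuous_mul_const z)) h he

lemma mul_mem_of_mem_mulSpan_left (hP : IsClosed (P : Set L)) {z e : L}
    (h : ∀ s ∈ S, ∀ t ∈ T, z * (s * t) ∈ P) (he : e ∈ mulSpan S T) : z * e ∈ P :=
  mulSpan_le (P := P.comap (LinearMap.mulLeft ℂ z))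
    (hP.preimage (continuous_const_mul z)) h he

lemma mul_star_self_pow_succ_mem_mulSpan [Star L]
    (hS : ∀ x ∈ S, ∀ y ∈ S, ∀ z ∈ S, x * star y * z ∈ S) {a : L} (ha : a ∈ S) (k : ℕ) :
    (a * star a) ^ (k + 1) ∈ mulSpan S (star '' S) := by
  rw [pow_succ, ← mul_assoc, mul_pow_mul]
  exact mul_mem_mulSpan (mul_star_mul_self_pow_mem hS ha k) ⟨a, ha, rfl⟩

lemma star_mul_self_pow_succ_mem_mulSpan [Star L]
    (hS : ∀ x ∈ S, ∀ y ∈ S, ∀ z ∈ S, x * star y * z ∈ S) {a : L} (ha : a ∈ S) (k : ℕ) :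
    (star a * a) ^ (k + 1) ∈ mulSpan (star '' S) S := by
  rw [pow_succ', mul_assoc]
  exact mul_mem_mulSpan ⟨a, ha, rfl⟩ (mul_star_mul_self_pow_mem hS ha k)

end MulSpan

section FellBundle

variable {G L : Type*} [Group G] [CStarAlgebra L]

lemma mul_star_mul_mem {A : G → Submodule ℂ L}
    (hmul : ∀ r s : G, ∀ a ∈ A r, ∀ a' ∈ A s, a * a' ∈ A (r * s))
    (hstar : ∀ t : G, ∀ a ∈ A t, star a ∈ A t⁻¹) (t : G) :
    ∀ a₁ ∈ A t, ∀ a₂ ∈ A t, ∀ a₃ ∈ A t, a₁ * star a₂ * a₃ ∈ A t :=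
  fun _ h₁ _ h₂ _ h₃ => by simpa using hmul _ _ _ (hmul _ _ _ h₁ _ (hstar _ _ h₂)) _ h₃

variable (A B X : G → Submodule ℂ L)

theorem mulSpan_leftAct_le_rightAct
    (hAmul : ∀ r s : G, ∀ a ∈ A r, ∀ a' ∈ A s, a * a' ∈ A (r * s))
    (hAstar : ∀ t : G, ∀ a ∈ A t, star a ∈ A t⁻¹)
    (hXactL : ∀ r s : G, ∀ a ∈ A r, ∀ x ∈ X s, a * x ∈ X (r * s))
    (hXinnerR : ∀ r s : G, ∀ x ∈ X r, ∀ y ∈ X s, star x * y ∈ B (r⁻¹ * s))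
    (hsfullL : ∀ t : G,
      mulSpan (X t : Set L) (star '' (X t : Set L))
        = mulSpan (A t : Set L) (star '' (A t : Set L)))
    (r s : G) : mulSpan (A r : Set L) (X s : Set L) ≤ mulSpan (X r : Set L) (B s : Set L) := by
  have hP := isClosed_mulSpan (X r : Set L) (B s : Set L)
  refine mulSpan_le hP fun a ha x hx => ?_
  refine mem_of_forall_pow_mul_star_self_mul_mem
    (P := (mulSpan (X r : Set L) (B s : Set L)).comap (LinearMap.mulRight ℂ x))
    (hP.preimage (continuous_mul_const x)) fun k => ?_
  have hk := mul_star_self_pow_succ_mem_mulSpan (mul_star_mul_mem hAmul hAstar r) ha k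
  rw [← hsfullL r] at hk
  rw [Submodule.mem_comap, LinearMap.mulRight_apply, mul_assoc]
  refine mul_mem_of_mem_mulSpan_right hP ?_ hk
  rintro y hy _ ⟨y', hy', rfl⟩
  have hb : star y' * (a * x) ∈ B s := by
    simpa using hXinnerR r (r * s) y' hy' (a * x) (hXactL r s a ha x hx)
  rw [mul_assoc]
  exact mul_mem_mulSpan hy hb

theorem mulSpan_rightAct_le_leftAct
    (hBmul : ∀ r s : G, ∀ b ∈ B r, ∀ c ∈ B s, b * c ∈ B (r * s))
    (hBstar : ∀ t : G, ∀ b ∈ B t, star b ∈ B t⁻¹)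
    (hXactR : ∀ r s : G, ∀ x ∈ X r, ∀ b ∈ B s, x * b ∈ X (r * s))
    (hXinnerL : ∀ r s : G, ∀ x ∈ X r, ∀ y ∈ X s, x * star y ∈ A (r * s⁻¹))
    (hsfullR : ∀ t : G,
      mulSpan (star '' (X t : Set L)) (X t : Set L)
        = mulSpan (star '' (B t : Set L)) (B t : Set L))
    (r s : G) : mulSpan (X r : Set L) (B s : Set L) ≤ mulSpan (A r : Set L) (X s : Set L) := by
  have hP := isClosed_mulSpan (A r : Set L) (X s : Set L)
  refine mulSpan_le hP fun x hx b hb => ?_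
  refine mem_of_forall_mul_star_mul_self_pow_mem
    (P := (mulSpan (A r : Set L) (X s : Set L)).comap (LinearMap.mulLeft ℂ x))
    (hP.preimage (continuous_const_mul x)) fun k => ?_
  have hk := star_mul_self_pow_succ_mem_mulSpan (mul_star_mul_mem hBmul hBstar s) hb k
  rw [← hsfullR s] at hk
  rw [Submodule.mem_comap, LinearMap.mulLeft_apply, ← mul_assoc]
  refine mul_mem_of_mem_mulSpan_left hP ?_ hk
  rintro _ ⟨y, hy, rfl⟩ y' hy'
  have ha : x * b * star y ∈ A r := by
    simpa using hXinnerL (r * s) s (x * b) (hXactR r s x hx b hb) y hy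
  rw [← mul_assoc]
  exact mul_mem_mulSpan ha hy'

end FellBundle

theorem strongEquivalence_leftAct_eq_rightAct_general
    {G L : Type*} [Group G] [NormedRing L] [StarRing L] [CStarRing L]
    [NormedAlgebra ℂ L] [StarModule ℂ L] [CompleteSpace L]
    (A B X : G → Submodule ℂ L)
    (hAmul : ∀ r s : G, ∀ a ∈ A r, ∀ a' ∈ A s, a * a' ∈ A (r * s))
    (hAstar : ∀ t : G, ∀ a ∈ A t, star a ∈ A t⁻¹)
    (hBmul : ∀ r s : G, ∀ b ∈ B r, ∀ c ∈ B s, b * c ∈ B (r * s))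
    (hBstar : ∀ t : G, ∀ b ∈ B t, star b ∈ B t⁻¹)
    (hXactL : ∀ r s : G, ∀ a ∈ A r, ∀ x ∈ X s, a * x ∈ X (r * s))
    (hXactR : ∀ r s : G, ∀ x ∈ X r, ∀ b ∈ B s, x * b ∈ X (r * s))
    (hXinnerR : ∀ r s : G, ∀ x ∈ X r, ∀ y ∈ X s, star x * y ∈ B (r⁻¹ * s))
    (hXinnerL : ∀ r s : G, ∀ x ∈ X r, ∀ y ∈ X s, x * star y ∈ A (r * s⁻¹))
    (hsfullR : ∀ t : G,
      mulSpan (star '' (X t : Set L)) (X t : Set L)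
        = mulSpan (star '' (B t : Set L)) (B t : Set L))
    (hsfullL : ∀ t : G,
      mulSpan (X t : Set L) (star '' (X t : Set L))
        = mulSpan (A t : Set L) (star '' (A t : Set L))) :
    ∀ r s : G,
      mulSpan (A r : Set L) (X s : Set L) = mulSpan (X r : Set L) (B s : Set L) := by
  let _ : CStarAlgebra L := {}
  intro r s
  exact le_antisymm
    (mulSpan_leftAct_le_rightAct A B X hAmul hAstar hXactL hXinnerR hsfullL r s)
    (mulSpan_rightAct_le_leftAct A B X hBmul hBstar hXactR hXinnerL hsfullR r s)

/-- If `(X t)` is a concrete strong `(A t)`–`(B t)` equivalence bundle, then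
`A r ⋅ X s = X r ⋅ B s` for all `r, s ∈ G`. -/
theorem strongEquivalence_leftAct_eq_rightAct
    {G L : Type*} [Group G] [NormedRing L] [StarRing L] [CStarRing L]
    [NormedAlgebra ℂ L] [StarModule ℂ L] [CompleteSpace L]
    (A B X : G → Submodule ℂ L)
    (hAclosed : ∀ t : G, IsClosed (A t : Set L))
    (hAmul : ∀ r s : G, ∀ a ∈ A r, ∀ a' ∈ A s, a * a' ∈ A (r * s))
    (hAstar : ∀ t : G, ∀ a ∈ A t, star a ∈ A t⁻¹)
    (hBclosed : ∀ t : G, IsClosed (B t : Set L))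
    (hBmul : ∀ r s : G, ∀ b ∈ B r, ∀ c ∈ B s, b * c ∈ B (r * s))
    (hBstar : ∀ t : G, ∀ b ∈ B t, star b ∈ B t⁻¹)
    (hXclosed : ∀ t : G, IsClosed (X t : Set L))
    (hXactL : ∀ r s : G, ∀ a ∈ A r, ∀ x ∈ X s, a * x ∈ X (r * s))
    (hXactR : ∀ r s : G, ∀ x ∈ X r, ∀ b ∈ B s, x * b ∈ X (r * s))
    (hXinnerR : ∀ r s : G, ∀ x ∈ X r, ∀ y ∈ X s, star x * y ∈ B (r⁻¹ * s))
    (hXinnerL : ∀ r s : G, ∀ x ∈ X r, ∀ y ∈ X s, x * star y ∈ A (r * s⁻¹))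
    (hsfullR : ∀ t : G,
      mulSpan (star '' (X t : Set L)) (X t : Set L)
        = mulSpan (star '' (B t : Set L)) (B t : Set L))
    (hsfullL : ∀ t : G,
      mulSpan (X t : Set L) (star '' (X t : Set L))
        = mulSpan (A t : Set L) (star '' (A t : Set L))) :
    ∀ r s : G,
      mulSpan (A r : Set L) (X s : Set L) = mulSpan (X r : Set L) (B s : Set L) :=
  strongEquivalence_leftAct_eq_rightAct_general A B X hAmul hAstar hBmul hBstar hXactL hXactR
    hXinnerR hXinnerL hsfullR hsfullL
end

section
/- Let (B_t)_{t∈G} be a concrete Fell bundle over a group G in a C*-algebra L. Then for all r, s ∈ G the closed linear span of {b*·c·d : b, c ∈ B_s, d ∈ B_r} is contained in the closed linear span of {d·e*·f : d ∈ B_r, e, f ∈ B_{sr}}; in the span notation, (B_s*⋅B_s)⋅B_r ⊆ B_r⋅(B_{sr}*⋅B_{sr}). -/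
open Filter Topology

lemma mul_one_sub_pow_le_inv {s : ℝ} (hs₀ : 0 ≤ s) (hs₁ : s ≤ 1) (m : ℕ) :
    s * (1 - s) ^ m ≤ ((m : ℝ) + 1)⁻¹ := by
  have h₀ : 0 ≤ (1 - s) ^ m := pow_nonneg (by linarith) m
  rw [← one_div, le_div_iff₀ (by positivity)]
  calc s * (1 - s) ^ m * (m + 1) ≤ (1 - s) ^ m * (1 + m * s) := by nlinarith
    _ ≤ (1 - s) ^ m * (1 + s) ^ m := by gcongr; exact one_add_mul_le_pow (by linarith) m
    _ = (1 - s ^ 2) ^ m := by rw [← mul_pow]; ring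
    _ ≤ 1 := pow_le_one₀ (by nlinarith) (by nlinarith)

section CStarAlgebra

variable {A : Type*} [CStarAlgebra A]

lemma spectrum.le_norm_of_mem {a : A} {t : ℝ} (ht : t ∈ spectrum ℝ a) : t ≤ ‖a‖ := by
  obtain _ | _ := subsingleton_or_nontrivial A
  · simp [spectrum.of_subsingleton] at ht
  exact (Real.le_norm_self t).trans (spectrum.norm_le_norm_of_mem ht)

lemma norm_sq_mul_one_sub_smul_star_mul_self_pow_le (z : A) {M : ℝ} (hM : 0 < M)
    (hzM : ‖z‖ ^ 2 ≤ M) (n : ℕ) :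
    ‖z * (1 - M⁻¹ • (star z * z)) ^ n‖ ^ 2 ≤ M / (2 * n + 1) := by
  set y := star z * z
  set p : ℝ → ℝ := fun t => (1 - M⁻¹ * t) ^ n
  have hpy : (1 - M⁻¹ • y) ^ n = cfc p y := by
    rw [cfc_pow _ _ y, cfc_sub _ _ y, cfc_const_mul_id M⁻¹ y, cfc_const 1 y, map_one]
  have hconj : star (cfc p y) * y * cfc p y = cfc (fun t => t * (1 - M⁻¹ * t) ^ (2 * n)) y := by
    rw [(cfc_predicate p y).star_eq]
    nth_rw 2 [← cfc_id' ℝ y]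
    rw [← cfc_mul p (fun t => t) y, ← cfc_mul _ p y]
    exact cfc_congr fun t _ => by ring
  rw [sq, ← CStarRing.norm_star_mul_self, star_mul, mul_assoc, ← mul_assoc (star z),
    ← mul_assoc, hpy, hconj]
  refine norm_cfc_le (by positivity) fun t ht => ?_
  have ht₀ : 0 ≤ t := spectrum_star_mul_self_nonneg t ht
  have htM : M⁻¹ * t ≤ 1 := by
    rw [inv_mul_le_iff₀ hM, mul_one]
    calc t ≤ ‖y‖ := spectrum.le_norm_of_mem ht
      _ = ‖z‖ ^ 2 := by rw [CStarRing.norm_star_mul_self, sq]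
      _ ≤ M := hzM
  rw [Real.norm_of_nonneg (mul_nonneg ht₀ ((even_two_mul n).pow_nonneg _))]
  calc t * (1 - M⁻¹ * t) ^ (2 * n) = M * (M⁻¹ * t * (1 - M⁻¹ * t) ^ (2 * n)) := by
        field_simp
    _ ≤ M * ((2 * n : ℕ) + 1 : ℝ)⁻¹ := by
        gcongr; exact mul_one_sub_pow_le_inv (by positivity) htM _
    _ = M / (2 * n + 1) := by push_cast; ring

lemma tendsto_mul_one_sub_smul_star_mul_self_pow (z : A) {M : ℝ} (hM : 0 < M)
    (hzM : ‖z‖ ^ 2 ≤ M) :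
    Tendsto (fun n : ℕ => z * (1 - M⁻¹ • (star z * z)) ^ n) atTop (𝓝 0) := by
  have hbound : Tendsto (fun n : ℕ => √(M / (2 * n + 1))) atTop (𝓝 0) := by
    rw [← Real.sqrt_zero]
    refine (Real.continuous_sqrt.tendsto 0).comp (tendsto_const_nhds.div_atTop ?_)
    exact tendsto_atTop_add_const_right _ _
      (tendsto_natCast_atTop_atTop.const_mul_atTop two_pos)
  refine squeeze_zero_norm (fun n => ?_) hbound
  exact Real.le_sqrt_of_sq_le (norm_sq_mul_one_sub_smul_star_mul_self_pow_le z hM hzM n)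

end CStarAlgebra

section FellBundle

variable {G L : Type*} [Group G] [Ring L] [Algebra ℂ L] (B : G → Submodule ℂ L)

lemma mul_one_sub_smul_pow_mem
    (hmul : ∀ r s : G, ∀ b ∈ B r, ∀ c ∈ B s, b * c ∈ B (r * s)) {t : G} {z y : L} (hz : z ∈ B t) (hy : y ∈ B 1) (c : ℝ) (n : ℕ) :
    z * (1 - c • y) ^ n ∈ B t := by
  induction n with
  | zero => simpa using hz
  | succ n ih =>
    rw [pow_succ, ← mul_assoc, mul_sub, mul_one, mul_smul_comm]
    exact sub_mem ih ((B t).smul_of_tower_mem c (by simpa using hmul _ _ _ ih _ hy))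

variable [StarRing L]

lemma star_mul_self_mem_one (hmul : ∀ r s : G, ∀ b ∈ B r, ∀ c ∈ B s, b * c ∈ B (r * s))
    (hstar : ∀ t : G, ∀ b ∈ B t, star b ∈ B t⁻¹) {t : G} {z : L} (hz : z ∈ B t) :
    star z * z ∈ B 1 := by
  simpa using hmul _ _ _ (hstar t z hz) _ hz

lemma mul_one_sub_one_sub_smul_star_mul_self_pow_mem_span
    (hmul : ∀ r s : G, ∀ b ∈ B r, ∀ c ∈ B s, b * c ∈ B (r * s))
    (hstar : ∀ t : G, ∀ b ∈ B t, star b ∈ B t⁻¹) {r u : G} {x z : L} (hx : x ∈ B r)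
    (hz : z ∈ B u) (c : ℝ) (n : ℕ) :
    x * (1 - (1 - c • (star z * z)) ^ n) ∈ Submodule.span ℂ
      {w : L | ∃ d ∈ B r, ∃ e ∈ B u, ∃ f ∈ B u, w = d * (star e * f)} := by
  rw [← mul_neg_geom_sum, sub_sub_cancel, Finset.mul_sum, Finset.mul_sum]
  refine sum_mem fun i _ => ?_
  rw [smul_mul_assoc, mul_smul_comm, mul_assoc]
  refine Submodule.smul_of_tower_mem _ c (Submodule.subset_span ⟨x, hx, z, hz, _, ?_, rfl⟩)
  exact mul_one_sub_smul_pow_mem B hmul hz (star_mul_self_mem_one B hmul hstar hz) c i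

end FellBundle

theorem fellBundle_starMul_mul_subset_general
    {G L : Type*} [Group G] [NormedRing L] [StarRing L] [CStarRing L]
    [NormedAlgebra ℂ L] [StarModule ℂ L] [CompleteSpace L]
    (B : G → Submodule ℂ L)
    (hmul : ∀ r s : G, ∀ b ∈ B r, ∀ c ∈ B s, b * c ∈ B (r * s))
    (hstar : ∀ t : G, ∀ b ∈ B t, star b ∈ B t⁻¹) :
    ∀ r s : G,
      closedSpan {x : L | ∃ b ∈ B s, ∃ c ∈ B s, ∃ d ∈ B r, x = star b * c * d}
        ≤ closedSpan {x : L | ∃ d ∈ B r, ∃ e ∈ B (s * r), ∃ f ∈ B (s * r),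
            x = d * (star e * f)} := by
  let _ : CStarAlgebra L := { }
  intro r s
  refine Submodule.topologicalClosure_minimal _ (Submodule.span_le.mpr ?_)
    (Submodule.isClosed_topologicalClosure _)
  rintro _ ⟨b, hb, c, hc, d, hd, rfl⟩
  have hz : c * d ∈ B (s * r) := hmul s r c hc d hd
  have hx : star b * (c * d) ∈ B r := by simpa using hmul _ _ _ (hstar s b hb) _ hz
  set a := (‖c * d‖ ^ 2 + 1)⁻¹ • (star (c * d) * (c * d))
  have hsmall : Tendsto (fun n : ℕ => star b * (c * d * (1 - a) ^ n)) atTop (𝓝 0) := by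
    simpa only [mul_zero] using (tendsto_mul_one_sub_smul_star_mul_self_pow (c * d)
      (by positivity) (le_add_of_nonneg_right zero_le_one)).const_mul (star b)
  have htend : Tendsto (fun n : ℕ => star b * (c * d) * (1 - (1 - a) ^ n)) atTop
      (𝓝 (star b * c * d)) := by
    simpa only [mul_sub, mul_one, mul_assoc, sub_zero] using tendsto_const_nhds.sub hsmall
  exact (Submodule.isClosed_topologicalClosure _).mem_of_tendsto htend
    (.of_forall fun n => Submodule.le_topologicalClosure _
      (mul_one_sub_one_sub_smul_star_mul_self_pow_mem_span B hmul hstar hx hz _ n))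

/-- For a concrete Fell bundle `(B t)`, one has
`(B s* ⋅ B s) ⋅ B r ⊆ B r ⋅ (B (s*r)* ⋅ B (s*r))`: the closed linear span of
`{b* ⬝ c ⬝ d : b, c ∈ B s, d ∈ B r}` is contained in the closed linear span of
`{d ⬝ (e* ⬝ f) : d ∈ B r, e, f ∈ B (s*r)}`. -/
theorem fellBundle_starMul_mul_subset
    {G L : Type*} [Group G] [NormedRing L] [StarRing L] [CStarRing L]
    [NormedAlgebra ℂ L] [StarModule ℂ L] [CompleteSpace L]
    (B : G → Submodule ℂ L)
    (hclosed : ∀ t : G, IsClosed (B t : Set L))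
    (hmul : ∀ r s : G, ∀ b ∈ B r, ∀ c ∈ B s, b * c ∈ B (r * s))
    (hstar : ∀ t : G, ∀ b ∈ B t, star b ∈ B t⁻¹) :
    ∀ r s : G,
      closedSpan {x : L | ∃ b ∈ B s, ∃ c ∈ B s, ∃ d ∈ B r, x = star b * c * d}
        ≤ closedSpan {x : L | ∃ d ∈ B r, ∃ e ∈ B (s * r), ∃ f ∈ B (s * r),
            x = d * (star e * f)} :=
  fellBundle_starMul_mul_subset_general B hmul hstar
end

section
/- Let G be a locally compact Hausdorff topological group with left Haar measure μ and modular function Δ, and let A be a complex C*-algebra. For continuous compactly supported functions T : G×G → A and f, g : G → A and u ∈ G define: β_u(T) : G×G → A by β_u(T)(r,s) := Δ(u)·T(ru, su); the action (T·f) : G → A by (T·f)(r) := ∫_G T(r,s) f(s) dμ(s); the rank-one kernel ⟨f,g⟩ : G×G → A by ⟨f,g⟩(r,s) := f(r)·g(s)*; and the convolution (S∗T)(r,s) := ∫_G S(r,z) T(z,s) dμ(z). Then for every u ∈ G and all continuous compactly supported T : G×G → A and f, g : G → A, one has β_u(⟨β_{u⁻¹}(T)·f, g⟩) = T ∗ β_u(⟨f,g⟩)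 as A-valued functions on G×G. -/
open MeasureTheory

/-!
After unfolding, both sides at `(r, s)` are `Δ(u)` times an integral against `star (g (s u))`.
The substitution `z ↦ z u` turns `Δ(u⁻¹) ∫ T(r, z u⁻¹) f(z) dz` into `∫ T(r, z) f(z u) dz`,
by the defining identity of `Δ`, extended from real-valued to `A`-valued integrands by testing
against continuous linear functionals.
-/

/-- The canonical `G`-action on kernels: `β_u(T)(r,s) := Δ(u) • T(ru, su)`. -/
noncomputable def kernelAct {G A : Type*} [Group G] [AddCommGroup A] [Module ℝ A]
    (Δ : G → ℝ) (u : G) (T : G → G → A) : G → G → A :=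
  fun r s => Δ u • T (r * u) (s * u)

/-- The action of a kernel on a function: `(T·f)(r) := ∫ T(r,s) f(s) dμ(s)`. -/
noncomputable def kernelApply {G A : Type*} [MeasurableSpace G]
    [NormedRing A] [NormedSpace ℝ A] [CompleteSpace A]
    (μ : Measure G) (T : G → G → A) (f : G → A) : G → A :=
  fun r => ∫ s, T r s * f s ∂μ

/-- The rank-one kernel `⟨f,g⟩(r,s) := f(r) ⬝ g(s)*`. -/
def rankOneKernel {G A : Type*} [Mul A] [Star A] (f g : G → A) : G → G → A :=
  fun r s => f r * star (g s)

/-- Convolution of kernels: `(S∗T)(r,s) := ∫ S(r,z) T(z,s) dμ(z)`. -/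
noncomputable def kernelConv {G A : Type*} [MeasurableSpace G]
    [NormedRing A] [NormedSpace ℝ A] [CompleteSpace A]
    (μ : Measure G) (S T : G → G → A) : G → G → A :=
  fun r s => ∫ z, S r z * T z s ∂μ

def IsModularFunction {G : Type*} [Group G] [TopologicalSpace G] [MeasurableSpace G]
    (μ : Measure G) (Δ : G → ℝ) : Prop :=
  ∀ u : G, ∀ h : G → ℝ, Continuous h → HasCompactSupport h →
    ∫ z, h (z * u) ∂μ = (Δ u)⁻¹ * ∫ z, h z ∂μ

namespace IsModularFunction

variable {G E : Type*} [Group G] [TopologicalSpace G] [ContinuousMul G]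
  [MeasurableSpace G] [OpensMeasurableSpace G] {μ : Measure G} [IsFiniteMeasureOnCompacts μ]
  {Δ : G → ℝ} [NormedAddCommGroup E] [NormedSpace ℝ E] [CompleteSpace E]

theorem integral_comp_mul_right (hΔ : IsModularFunction μ Δ) {F : G → E} (hF : Continuous F)
    (hFc : HasCompactSupport F) (u : G) :
    ∫ z, F (z * u) ∂μ = (Δ u)⁻¹ • ∫ z, F z ∂μ := by
  have hFu : Continuous fun z => F (z * u) := hF.comp (continuous_mul_const u)
  have hFuc : HasCompactSupport fun z => F (z * u) := hFc.comp_homeomorph (Homeomorph.mulRight u)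
  refine (SeparatingDual.eq_iff_forall_dual_eq (R := ℝ)).2 fun φ => ?_
  rw [← φ.integral_comp_comm (hFu.integrable_of_hasCompactSupport hFuc), φ.map_smul,
    ← φ.integral_comp_comm (hF.integrable_of_hasCompactSupport hFc)]
  exact hΔ u (φ ∘ F) (φ.continuous.comp hF) (hFc.comp_left (map_zero φ))

theorem smul_integral_comp_mul_right (hΔ : IsModularFunction μ Δ) {F : G → E}
    (hF : Continuous F) (hFc : HasCompactSupport F) (u : G) :
    Δ u • ∫ z, F (z * u) ∂μ = ∫ z, F z ∂μ := by
  rw [hΔ.integral_comp_mul_right hF hFc]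
  rcases eq_or_ne (Δ u) 0 with hu | hu
  · -- Every translate by `u` then integrates to zero, in particular that of `F (· * u⁻¹)`.
    have hzero := hΔ.integral_comp_mul_right (hF.comp (continuous_mul_const u⁻¹))
      (hFc.comp_homeomorph (Homeomorph.mulRight u⁻¹)) u
    simp only [Function.comp_apply, mul_inv_cancel_right, hu, inv_zero, zero_smul] at hzero
    rw [hu, zero_smul, hzero]
  · exact smul_inv_smul₀ hu _

end IsModularFunction

theorem kernelAct_rankOneKernel_kernelApply_eq_kernelConv_general
    {G A : Type*} [Group G] [TopologicalSpace G] [IsTopologicalGroup G]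
    [MeasurableSpace G] [BorelSpace G]
    (μ : Measure G) [μ.IsHaarMeasure]
    [NormedRing A] [StarRing A] [NormedAlgebra ℂ A]
    [CompleteSpace A]
    (Δ : G → ℝ)
    (hΔ : ∀ u : G, ∀ h : G → ℝ, Continuous h → HasCompactSupport h →
      ∫ z, h (z * u) ∂μ = (Δ u)⁻¹ * ∫ z, h z ∂μ)
    (u : G) (T : G → G → A) (f g : G → A)
    (hT : Continuous fun p : G × G => T p.1 p.2)
    (hf : Continuous f) (hfc : HasCompactSupport f) :
    kernelAct Δ u (rankOneKernel (kernelApply μ (kernelAct Δ u⁻¹ T) f) g)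
      = kernelConv μ T (kernelAct Δ u (rankOneKernel f g)) := by
  funext r s
  set F : G → A := fun z => T r z * f (z * u)
  have hF : Continuous F := (hT.uncurry_left r).mul (hf.comp (continuous_mul_const u))
  have hFc : HasCompactSupport F := (hfc.comp_homeomorph (Homeomorph.mulRight u)).mul_left
  have hsubst : Δ u⁻¹ • ∫ z, T r (z * u⁻¹) * f z ∂μ = ∫ z, F z ∂μ := by
    simpa [F] using IsModularFunction.smul_integral_comp_mul_right hΔ hF hFc u⁻¹
  simp only [kernelAct, rankOneKernel, kernelApply, kernelConv, mul_inv_cancel_right]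
  calc Δ u • ((∫ z, (Δ u⁻¹ • T r (z * u⁻¹)) * f z ∂μ) * star (g (s * u)))
      = Δ u • ((∫ z, F z ∂μ) * star (g (s * u))) := by
        simp only [smul_mul_assoc, integral_smul, hsubst]
    _ = ∫ z, Δ u • (F z * star (g (s * u))) ∂μ := by
        rw [integral_smul, integral_mul_const_of_integrable (hF.integrable_of_hasCompactSupport hFc)]
    _ = ∫ z, T r z * (Δ u • (f (z * u) * star (g (s * u)))) ∂μ := by
        simp only [F, mul_smul_comm, mul_assoc]

/-- Compatibility of the left action of the semidirect-product bundle of the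
canonical action on kernels with the left inner product of the canonical
`L²`-bundle: `β_u(⟨β_{u⁻¹}(T)·f, g⟩) = T ∗ β_u(⟨f,g⟩)`. -/
theorem kernelAct_rankOneKernel_kernelApply_eq_kernelConv
    {G A : Type*} [Group G] [TopologicalSpace G] [IsTopologicalGroup G]
    [LocallyCompactSpace G] [T2Space G] [MeasurableSpace G] [BorelSpace G]
    (μ : Measure G) [μ.IsHaarMeasure]
    [NormedRing A] [StarRing A] [CStarRing A] [NormedAlgebra ℂ A]
    [StarModule ℂ A] [CompleteSpace A]
    (Δ : G → ℝ)
    (hΔ : ∀ u : G, ∀ h : G → ℝ, Continuous h → HasCompactSupport h →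
      ∫ z, h (z * u) ∂μ = (Δ u)⁻¹ * ∫ z, h z ∂μ)
    (u : G) (T : G → G → A) (f g : G → A)
    (hT : Continuous fun p : G × G => T p.1 p.2)
    (hTc : HasCompactSupport fun p : G × G => T p.1 p.2)
    (hf : Continuous f) (hfc : HasCompactSupport f)
    (hg : Continuous g) (hgc : HasCompactSupport g) :
    kernelAct Δ u (rankOneKernel (kernelApply μ (kernelAct Δ u⁻¹ T) f) g)
      = kernelConv μ T (kernelAct Δ u (rankOneKernel f g)) :=
  kernelAct_rankOneKernel_kernelApply_eq_kernelConv_general μ Δ hΔ u T f g hT hf hfc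
end
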